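/- Let Φ(t) = (2π)^{−1/2} ∫_{−∞}^{t} e^{−u²/2} du be the standard normal cumulative distribution function. Then ∫_{−∞}^{∞} Φ(t)·Φ(−t) dt = 1/√π. -/

import Mathlib

/-!
Write `Φ`, `φ` for the standard normal distribution function and density, and
`h(t) = Φ(t) Φ(-t)`, so that `h' = φ (Φ(-·) - Φ)` and `φ'(t) = -t φ(t)`. Integrating by parts twice,
`∫ h = -∫ t h'(t) dt = 2 ∫ t φ(t) Φ(t) dt = 2 ∫ φ²`, and `2 φ(t)² = d/dt [Φ(√2 t) / √π]`.
Keeping the boundary terms gives an explicit primitive `H = cdfMulCDFNegPrimitive` of `h`.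
It satisfies `H(-t) = 1/√π - H(t)` and tends to `1/√π` at `+∞` by the Mills-ratio bound
`t Φ(-t) ≤ φ(t)`; as `h ≥ 0`, these limits also make `h` integrable.
-/

open MeasureTheory

noncomputable section

/-- The standard normal cumulative distribution function. -/
def stdGaussCDF (t : ℝ) : ℝ :=
  ∫ u in Set.Iic t, Real.exp (-u ^ 2 / 2) / Real.sqrt (2 * Real.pi)

open Real Set Filter Topology ProbabilityTheory

theorem integrable_deriv_of_nonneg {g g' : ℝ → ℝ} {m n : ℝ}
    (hderiv : ∀ x, HasDerivAt g (g' x) x) (hg' : ∀ x, 0 ≤ g' x)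
    (hbot : Tendsto g atBot (𝓝 m)) (htop : Tendsto g atTop (𝓝 n)) : Integrable g' := by
  have hcont : Continuous g := continuous_iff_continuousAt.2 fun x => (hderiv x).continuousAt
  have hint (a b : ℝ) : IntervalIntegrable g' volume a b :=
    intervalIntegral.intervalIntegrable_deriv_of_nonneg hcont.continuousOn
      (fun x _ => hderiv x) fun x _ => hg' x
  have hFTC (i : ℝ) : ∫ x in -i..i, ‖g' x‖ = g i - g (-i) := by
    simp_rw [Real.norm_of_nonneg (hg' _)]
    exact intervalIntegral.integral_eq_sub_of_hasDerivAt (fun x _ => hderiv x) (hint _ _)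
  refine integrable_of_intervalIntegral_norm_tendsto (n - m) (fun i => (hint (-i) i).1)
    tendsto_neg_atTop_atBot tendsto_id ?_
  simpa only [hFTC, Function.comp_apply] using htop.sub (hbot.comp tendsto_neg_atTop_atBot)

theorem integral_of_hasDerivAt_of_nonneg {g g' : ℝ → ℝ} {m n : ℝ}
    (hderiv : ∀ x, HasDerivAt g (g' x) x) (hg' : ∀ x, 0 ≤ g' x)
    (hbot : Tendsto g atBot (𝓝 m)) (htop : Tendsto g atTop (𝓝 n)) : ∫ x, g' x = n - m :=
  integral_of_hasDerivAt_of_tendsto hderiv (integrable_deriv_of_nonneg hderiv hg' hbot htop)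
    hbot htop

def stdGaussPDF (u : ℝ) : ℝ := exp (-u ^ 2 / 2) / √(2 * π)

theorem stdGaussCDF_eq_integral (t : ℝ) : stdGaussCDF t = ∫ u in Iic t, stdGaussPDF u := rfl

theorem stdGaussPDF_eq_gaussianPDFReal : stdGaussPDF = gaussianPDFReal 0 1 := by
  ext u
  simp [stdGaussPDF, gaussianPDFReal, div_eq_inv_mul]

theorem stdGaussPDF_nonneg (u : ℝ) : 0 ≤ stdGaussPDF u := by
  unfold stdGaussPDF; positivity

theorem stdGaussPDF_neg (u : ℝ) : stdGaussPDF (-u) = stdGaussPDF u := by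
  simp [stdGaussPDF]

theorem continuous_stdGaussPDF : Continuous stdGaussPDF := by
  unfold stdGaussPDF; fun_prop

theorem integrable_stdGaussPDF : Integrable stdGaussPDF := by
  rw [stdGaussPDF_eq_gaussianPDFReal]; exact integrable_gaussianPDFReal 0 1

theorem integral_stdGaussPDF : ∫ u, stdGaussPDF u = 1 := by
  rw [stdGaussPDF_eq_gaussianPDFReal]; exact integral_gaussianPDFReal_eq_one 0 one_ne_zero

theorem integrable_mul_stdGaussPDF : Integrable fun u => u * stdGaussPDF u := by
  refine ((integrable_mul_exp_neg_mul_sq (b := 1 / 2) (by norm_num)).div_const √(2 * π)).congr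
    (ae_of_all _ fun u => ?_)
  simp only [stdGaussPDF]
  ring_nf

theorem hasDerivAt_stdGaussPDF (u : ℝ) : HasDerivAt stdGaussPDF (-(u * stdGaussPDF u)) u := by
  have hexponent : HasDerivAt (fun x : ℝ => -x ^ 2 / 2) (-u) u :=
    ((hasDerivAt_pow 2 u).neg.div_const 2).congr_deriv (by norm_num; ring)
  exact (hexponent.exp.div_const √(2 * π)).congr_deriv (by simp only [stdGaussPDF]; ring)

theorem tendsto_stdGaussPDF_atTop : Tendsto stdGaussPDF atTop (𝓝 0) := by
  have : Tendsto (fun u : ℝ => -u ^ 2 / 2) atTop atBot :=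
    (tendsto_neg_atTop_atBot.comp (tendsto_pow_atTop two_ne_zero)).atBot_div_const two_pos
  rw [← zero_div √(2 * π)]
  exact (tendsto_exp_atBot.comp this).div_const _

theorem integral_Ioi_mul_stdGaussPDF (t : ℝ) : ∫ u in Ioi t, u * stdGaussPDF u = stdGaussPDF t := by
  have hderiv (u : ℝ) (_ : u ∈ Ici t) : HasDerivAt (-stdGaussPDF) (u * stdGaussPDF u) u := by
    simpa using (hasDerivAt_stdGaussPDF u).neg
  have hlim : Tendsto (-stdGaussPDF) atTop (𝓝 0) := by
    rw [← neg_zero]; exact tendsto_stdGaussPDF_atTop.neg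
  rw [integral_Ioi_of_hasDerivAt_of_tendsto' hderiv integrable_mul_stdGaussPDF.integrableOn hlim,
    Pi.neg_apply, zero_sub, neg_neg]

theorem stdGaussCDF_eq_cdf : stdGaussCDF = cdf (gaussianReal 0 1) := by
  ext t
  rw [cdf_eq_real, measureReal_def, gaussianReal_apply_eq_integral _ one_ne_zero,
    ENNReal.toReal_ofReal
      (setIntegral_nonneg measurableSet_Iic fun u _ => gaussianPDFReal_nonneg _ _ u),
    ← stdGaussPDF_eq_gaussianPDFReal, stdGaussCDF_eq_integral]

theorem stdGaussCDF_nonneg (t : ℝ) : 0 ≤ stdGaussCDF t := by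
  rw [stdGaussCDF_eq_cdf]; exact cdf_nonneg _ t

theorem tendsto_stdGaussCDF_atTop : Tendsto stdGaussCDF atTop (𝓝 1) := by
  rw [stdGaussCDF_eq_cdf]; exact tendsto_cdf_atTop _

theorem tendsto_stdGaussCDF_atBot : Tendsto stdGaussCDF atBot (𝓝 0) := by
  rw [stdGaussCDF_eq_cdf]; exact tendsto_cdf_atBot _

theorem hasDerivAt_stdGaussCDF (t : ℝ) : HasDerivAt stdGaussCDF (stdGaussPDF t) t := by
  have hsplit : stdGaussCDF = fun x => stdGaussCDF 0 + ∫ u in (0 : ℝ)..x, stdGaussPDF u := by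
    ext x
    rw [stdGaussCDF_eq_integral, stdGaussCDF_eq_integral, ← intervalIntegral.integral_Iic_sub_Iic
      integrable_stdGaussPDF.integrableOn integrable_stdGaussPDF.integrableOn, add_sub_cancel]
  rw [hsplit]
  exact ((continuous_stdGaussPDF.integral_hasStrictDerivAt 0 t).hasDerivAt).const_add _

theorem stdGaussCDF_neg_eq_integral_Ioi (t : ℝ) :
    stdGaussCDF (-t) = ∫ u in Ioi t, stdGaussPDF u := by
  rw [stdGaussCDF_eq_integral]
  simpa only [stdGaussPDF_neg, neg_neg] using integral_comp_neg_Iic (-t) stdGaussPDF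

theorem stdGaussCDF_add_stdGaussCDF_neg (t : ℝ) : stdGaussCDF t + stdGaussCDF (-t) = 1 := by
  rw [stdGaussCDF_neg_eq_integral_Ioi, stdGaussCDF_eq_integral, ← integral_stdGaussPDF]
  exact intervalIntegral.integral_Iic_add_Ioi integrable_stdGaussPDF.integrableOn
    integrable_stdGaussPDF.integrableOn

theorem mul_stdGaussCDF_neg_le (t : ℝ) : t * stdGaussCDF (-t) ≤ stdGaussPDF t := by
  rw [stdGaussCDF_neg_eq_integral_Ioi, ← integral_const_mul, ← integral_Ioi_mul_stdGaussPDF]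
  refine setIntegral_mono_on (integrable_stdGaussPDF.const_mul t).integrableOn
    integrable_mul_stdGaussPDF.integrableOn measurableSet_Ioi fun u hu => ?_
  exact mul_le_mul_of_nonneg_right hu.out.le (stdGaussPDF_nonneg u)

theorem tendsto_mul_stdGaussCDF_neg_atTop :
    Tendsto (fun t => t * stdGaussCDF (-t)) atTop (𝓝 0) := by
  refine squeeze_zero' ?_ ?_ tendsto_stdGaussPDF_atTop
  · filter_upwards [eventually_ge_atTop 0] with t ht
    exact mul_nonneg ht (stdGaussCDF_nonneg _)
  · filter_upwards [eventually_ge_atTop 0] with t ht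
    exact mul_stdGaussCDF_neg_le t

theorem stdGaussPDF_sqrt_two_mul (t : ℝ) :
    stdGaussPDF (√2 * t) * √2 / √π = 2 * stdGaussPDF t ^ 2 := by
  have h2 : √2 ^ 2 = 2 := sq_sqrt zero_le_two
  have hπ : √π ^ 2 = π := sq_sqrt pi_pos.le
  simp only [stdGaussPDF, div_pow, sqrt_mul zero_le_two, mul_pow, h2, hπ]
  field_simp
  rw [hπ, ← exp_nat_mul]
  ring_nf

def cdfMulCDFNegPrimitive (t : ℝ) : ℝ :=
  t * (stdGaussCDF t * stdGaussCDF (-t)) + stdGaussPDF t * (stdGaussCDF (-t) - stdGaussCDF t)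
    + stdGaussCDF (√2 * t) / √π

theorem hasDerivAt_cdfMulCDFNegPrimitive (t : ℝ) :
    HasDerivAt cdfMulCDFNegPrimitive (stdGaussCDF t * stdGaussCDF (-t)) t := by
  have hΦ := hasDerivAt_stdGaussCDF t
  have hΦneg : HasDerivAt (fun x => stdGaussCDF (-x)) (-stdGaussPDF t) t :=
    ((hasDerivAt_stdGaussCDF (-t)).comp t (hasDerivAt_neg t)).congr_deriv
      (by rw [stdGaussPDF_neg, mul_neg_one])
  have hΦsqrt : HasDerivAt (fun x => stdGaussCDF (√2 * x)) (stdGaussPDF (√2 * t) * √2) t :=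
    (hasDerivAt_stdGaussCDF (√2 * t)).comp t
      ((hasDerivAt_id t).const_mul √2 |>.congr_deriv (mul_one _))
  have := (((hasDerivAt_id t).mul (hΦ.mul hΦneg)).add
    ((hasDerivAt_stdGaussPDF t).mul (hΦneg.sub hΦ))).add (hΦsqrt.div_const √π)
  refine this.congr_deriv ?_
  rw [stdGaussPDF_sqrt_two_mul]
  simp only [Pi.mul_apply, Pi.sub_apply, id]
  ring

theorem cdfMulCDFNegPrimitive_neg (t : ℝ) :
    cdfMulCDFNegPrimitive (-t) = 1 / √π - cdfMulCDFNegPrimitive t := by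
  have hsum := stdGaussCDF_add_stdGaussCDF_neg (√2 * t)
  simp only [cdfMulCDFNegPrimitive, neg_neg, stdGaussPDF_neg, mul_neg]
  linear_combination hsum / √π

theorem tendsto_cdfMulCDFNegPrimitive_atTop :
    Tendsto cdfMulCDFNegPrimitive atTop (𝓝 (1 / √π)) := by
  have hneg : Tendsto (fun t => stdGaussCDF (-t)) atTop (𝓝 0) :=
    tendsto_stdGaussCDF_atBot.comp tendsto_neg_atTop_atBot
  have hsqrt : Tendsto (fun t => stdGaussCDF (√2 * t)) atTop (𝓝 1) :=
    tendsto_stdGaussCDF_atTop.comp (tendsto_id.const_mul_atTop (by positivity))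
  have := ((tendsto_stdGaussCDF_atTop.mul tendsto_mul_stdGaussCDF_neg_atTop).add
    (tendsto_stdGaussPDF_atTop.mul (hneg.sub tendsto_stdGaussCDF_atTop))).add
    (hsqrt.div_const √π)
  rw [show 1 / √π = 1 * 0 + 0 * (0 - 1) + 1 / √π by ring]
  refine this.congr fun t => ?_
  simp only [cdfMulCDFNegPrimitive]
  ring

theorem tendsto_cdfMulCDFNegPrimitive_atBot : Tendsto cdfMulCDFNegPrimitive atBot (𝓝 0) := by
  have := (tendsto_cdfMulCDFNegPrimitive_atTop.const_sub (1 / √π)).comp tendsto_neg_atBot_atTop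
  rw [sub_self] at this
  refine this.congr fun t => ?_
  rw [Function.comp_apply, cdfMulCDFNegPrimitive_neg, sub_sub_cancel]

/-- `∫ Φ(t)·Φ(−t) dt = 1/√π`. -/
theorem integral_gaussCDF_mul_gaussCDF_neg :
    ∫ t : ℝ, stdGaussCDF t * stdGaussCDF (-t) = 1 / Real.sqrt Real.pi := by
  rw [integral_of_hasDerivAt_of_nonneg hasDerivAt_cdfMulCDFNegPrimitive
    (fun t => mul_nonneg (stdGaussCDF_nonneg t) (stdGaussCDF_nonneg (-t)))
    tendsto_cdfMulCDFNegPrimitive_atBot tendsto_cdfMulCDFNegPrimitive_atTop, sub_zero]
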